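/- Along the closed-loop dynamics ρ' = −i[H_A + u H_B, ρ], ρ_d' = −i[H_A, ρ_d] with feedback u = tr(ρ_d · (−i)[H_B, ρ]), the Lyapunov function V(t) = tr(ρ(t)²) − tr(ρ_d(t) ρ(t)) satisfies V'(t) = −u(t)² ≤ 0. -/

import Mathlib

/-!
Both states evolve by commutator flows `ẋ = -i[X, x]`, and for two such flows cyclicity of the
trace gives `d/dt tr(f g) = -i tr(f [Y - X, g])`. For `tr(ρ²)` the generators coincide, so the
purity is conserved; for `tr(ρ_d ρ)` they differ by `u H_B`, and the feedback law turns the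
derivative into `u²`. As `u` is real, `-u² ≤ 0`.
-/

open Matrix ComplexOrder

attribute [local instance] Matrix.normedAddCommGroup Matrix.normedSpace

section

variable {𝕜 R n : Type*} [NontriviallyNormedField 𝕜] [Fintype n]

theorem Matrix.trace_commutator_mul [CommRing R] (A B C : Matrix n n R) :
    ((A * B - B * A) * C).trace = -(B * (A * C - C * A)).trace := by
  simp only [sub_mul, mul_sub, trace_sub, Matrix.mul_assoc]
  rw [trace_mul_comm A (B * C), Matrix.mul_assoc]
  ring

theorem hasDerivAt_matrix [NormedAddCommGroup R] [NormedSpace 𝕜 R] {m : Type*} [Fintype m]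
    {f : 𝕜 → Matrix m n R} {f' : Matrix m n R} {x : 𝕜} :
    HasDerivAt f f' x ↔ ∀ i j, HasDerivAt (fun s => f s i j) (f' i j) x :=
  hasDerivAt_pi.trans (forall_congr' fun _ => hasDerivAt_pi)

variable [NormedRing R] [NormedAlgebra 𝕜 R] {f g : 𝕜 → Matrix n n R} {f' g' : Matrix n n R} {x : 𝕜}

theorem HasDerivAt.matrix_trace (hf : HasDerivAt f f' x) :
    HasDerivAt (fun s => (f s).trace) f'.trace x :=
  HasDerivAt.fun_sum fun i _ => hasDerivAt_matrix.1 hf i i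

theorem HasDerivAt.matrix_mul (hf : HasDerivAt f f' x) (hg : HasDerivAt g g' x) :
    HasDerivAt (fun s => f s * g s) (f' * g x + f x * g') x :=
  hasDerivAt_matrix.2 fun i j => by
    simpa only [mul_apply, Matrix.add_apply, ← Finset.sum_add_distrib] using
      HasDerivAt.fun_sum fun k _ => (hasDerivAt_matrix.1 hf i k).fun_mul (hasDerivAt_matrix.1 hg k j)

end

section

variable {𝕜 R n : Type*} [NontriviallyNormedField 𝕜] [Fintype n] [NormedCommRing R]
  [NormedAlgebra 𝕜 R] {f g : 𝕜 → Matrix n n R} {X Y : Matrix n n R} {c : R} {x : 𝕜}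

theorem hasDerivAt_trace_mul_of_commutator
    (hf : HasDerivAt f (c • (X * f x - f x * X)) x)
    (hg : HasDerivAt g (c • (Y * g x - g x * Y)) x) :
    HasDerivAt (fun s => (f s * g s).trace)
      (c * (f x * ((Y - X) * g x - g x * (Y - X))).trace) x := by
  convert (hf.matrix_mul hg).matrix_trace using 1
  simp only [smul_mul, Matrix.mul_smul, trace_add, trace_smul, trace_commutator_mul, smul_eq_mul]
  simp only [sub_mul, mul_sub, trace_sub]
  ring

end

theorem Complex.neg_sq_nonpos_of_im_eq_zero {z : ℂ} (hz : z.im = 0) : -z ^ 2 ≤ 0 := by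
  simpa [sq, Complex.conj_eq_iff_im.2 hz] using star_mul_self_nonneg z

theorem lyapunov_derivative_closed_loop_general {N : ℕ}
    (H_A H_B : Matrix (Fin N) (Fin N) ℂ)
    (ρ ρ_d : ℝ → Matrix (Fin N) (Fin N) ℂ)
    (u : ℝ → ℂ)
    (hu : ∀ t, u t = (ρ_d t * (-Complex.I • (H_B * ρ t - ρ t * H_B))).trace)
    (hureal : ∀ t, (u t).im = 0)
    (hρ : ∀ t, HasDerivAt ρ
      (-Complex.I • ((H_A + u t • H_B) * ρ t - ρ t * (H_A + u t • H_B))) t)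
    (hρd : ∀ t, HasDerivAt ρ_d
      (-Complex.I • (H_A * ρ_d t - ρ_d t * H_A)) t) :
    ∀ t, HasDerivAt (fun s => (ρ s * ρ s).trace - (ρ_d s * ρ s).trace)
        (-(u t) ^ 2) t ∧ -(u t) ^ 2 ≤ 0 := by
  intro t
  have hpurity : HasDerivAt (fun s => (ρ s * ρ s).trace) 0 t := by
    simpa using hasDerivAt_trace_mul_of_commutator (hρ t) (hρ t)
  have hu' : u t = -Complex.I * (ρ_d t * (H_B * ρ t - ρ t * H_B)).trace := by
    rw [hu t, Matrix.mul_smul, trace_smul, smul_eq_mul]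
  have hoverlap : HasDerivAt (fun s => (ρ_d s * ρ s).trace) (u t ^ 2) t := by
    refine (hasDerivAt_trace_mul_of_commutator (hρd t) (hρ t)).congr_deriv ?_
    rw [add_sub_cancel_left, smul_mul, Matrix.mul_smul, ← smul_sub, Matrix.mul_smul, trace_smul,
      smul_eq_mul]
    linear_combination (-u t) * hu'
  exact ⟨(hpurity.fun_sub hoverlap).congr_deriv (zero_sub _),
    Complex.neg_sq_nonpos_of_im_eq_zero (hureal t)⟩

/-- Along the closed loop `ρ' = -i[H_A + u H_B, ρ]`, `ρ_d' = -i[H_A, ρ_d]` with feedback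
`u = tr(ρ_d · (-i)[H_B, ρ])` (real-valued), the Lyapunov function
`V = tr(ρ²) - tr(ρ_d ρ)` satisfies `V' = -u² ≤ 0`. -/
theorem lyapunov_derivative_closed_loop {N : ℕ}
    (H_A H_B : Matrix (Fin N) (Fin N) ℂ)
    (hHA : H_Aᴴ = H_A) (hHB : H_Bᴴ = H_B)
    (ρ ρ_d : ℝ → Matrix (Fin N) (Fin N) ℂ)
    (hherm : ∀ t, (ρ t)ᴴ = ρ t) (hhermd : ∀ t, (ρ_d t)ᴴ = ρ_d t)
    (u : ℝ → ℂ)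
    (hu : ∀ t, u t = (ρ_d t * (-Complex.I • (H_B * ρ t - ρ t * H_B))).trace)
    (hureal : ∀ t, (u t).im = 0)
    (hρ : ∀ t, HasDerivAt ρ
      (-Complex.I • ((H_A + u t • H_B) * ρ t - ρ t * (H_A + u t • H_B))) t)
    (hρd : ∀ t, HasDerivAt ρ_d
      (-Complex.I • (H_A * ρ_d t - ρ_d t * H_A)) t) :
    ∀ t, HasDerivAt (fun s => (ρ s * ρ s).trace - (ρ_d s * ρ s).trace)
        (-(u t) ^ 2) t ∧ -(u t) ^ 2 ≤ 0 :=
  lyapunov_derivative_closed_loop_general H_A H_B ρ ρ_d u hu hureal hρ hρd
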